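/- arXiv:math/0403137 — 7 statements merged into one kernel-verified Lean document; each statement's English description precedes it below -/
import Mathlib

section
/- Let X : [0,1] → ℝ be a càdlàg function with no negative jumps (X(t) − X(t−) ≥ 0 for all t). For s ∈ [0,1] define Y(s) = m{ inf_{u ≤ r ≤ s} X(r) : 0 ≤ u ≤ s }, the Lebesgue measure of the set of running infima from times u up to s. Then Y is a continuous function of s. -/
/-!
Write `R s = runningInfRange X s`. If `t₁ < t₂`, `a ≤ X` on `[t₁, t₂]` and `X ≤ b` on
`[t₁, t₂)`, then `R t₁` and `R t₂` have the same part below `a`, and above `a` both lie in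
`[a, b]` up to the single point `X t₂`; so their measures differ by at most `b - a`.
Right continuity makes `b - a` small on short intervals `[s, t]`. On `[t, s]` the left limit `L`
does the same, provided `X s ≥ L`: this is where the absence of negative jumps enters.
All infima are meaningful because a càdlàg path is bounded below on `[0, 1]` by compactness.
-/

open Set MeasureTheory Filter Topology Bornology

theorem IsCompact.bddBelow_image_of_isBoundedUnder {α β : Type*} [TopologicalSpace α]
    [SemilatticeInf β] [Nonempty β] {K : Set α} {f : α → β} (hK : IsCompact K)
    (hf : ∀ x ∈ K, IsBoundedUnder (· ≥ ·) (𝓝[K] x) f) : BddBelow (f '' K) := by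
  refine hK.induction_on (p := fun U ↦ BddBelow (f '' U)) (by simp)
    (fun _ _ hUV hV ↦ hV.mono (image_mono hUV))
    (fun _ _ hU hV ↦ by simpa only [image_union] using hU.union hV) fun x hx ↦ ?_
  obtain ⟨b, hb⟩ := hf x hx
  exact ⟨{y | b ≤ f y}, hb, b, forall_mem_image.2 fun _ hy ↦ hy⟩

theorem bddBelow_image_Icc_of_cadlag {X : ℝ → ℝ} {a b : ℝ}
    (hright : ∀ t ∈ Icc a b, ContinuousWithinAt X (Ici t) t)
    (hleft : ∀ t ∈ Ioc a b, ∃ L, Tendsto X (𝓝[<] t) (𝓝 L)) :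
    BddBelow (X '' Icc a b) := by
  refine isCompact_Icc.bddBelow_image_of_isBoundedUnder fun t ht ↦ ?_
  have hge : IsBoundedUnder (· ≥ ·) (𝓝[≥] t) X := (hright t ht).isBoundedUnder_ge
  rcases ht.1.eq_or_lt with rfl | hat
  · exact hge.mono (nhdsWithin_mono _ Icc_subset_Ici_self)
  · obtain ⟨L, hL⟩ := hleft t ⟨hat, ht.2⟩
    refine IsBoundedUnder.mono nhdsWithin_le_nhds ?_
    rw [← nhdsLT_sup_nhdsGE, IsBoundedUnder, map_sup]
    exact isBounded_sup hL.isBoundedUnder_ge hge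

theorem le_csInf_image_Icc {α β : Type*} [Preorder α] [ConditionallyCompleteLattice β]
    {f : α → β} {u v : α} {a : β} (huv : u ≤ v) (h : ∀ r ∈ Icc u v, a ≤ f r) :
    a ≤ sInf (f '' Icc u v) :=
  le_csInf ((nonempty_Icc.2 huv).image f) (forall_mem_image.2 h)

theorem csInf_image_Icc_eq_inf {α β : Type*} [LinearOrder α] [ConditionallyCompleteLattice β]
    {f : α → β} {u v w : α} (hf : BddBelow (f '' Icc u w)) (huv : u ≤ v) (hvw : v ≤ w) :
    sInf (f '' Icc u w) = sInf (f '' Icc u v) ⊓ sInf (f '' Icc v w) := by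
  rw [← Icc_union_Icc_eq_Icc huv hvw, image_union] at hf ⊢
  exact csInf_union (hf.mono subset_union_left) ((nonempty_Icc.2 huv).image f)
    (hf.mono subset_union_right) ((nonempty_Icc.2 hvw).image f)

theorem volume_real_mem_Icc_of_subset_union_Icc {D A : Set ℝ} {a b x : ℝ} (hD : IsBounded D)
    (hab : a ≤ b) (hDA : D ⊆ A) (hA : A ⊆ D ∪ Icc a b ∪ {x}) :
    volume.real A ∈ Icc (volume.real D) (volume.real D + (b - a)) := by
  have hfin : volume (D ∪ Icc a b ∪ {x}) ≠ ⊤ :=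
    ((hD.union (Metric.isBounded_Icc a b)).union isBounded_singleton).measure_lt_top.ne
  refine ⟨measureReal_mono hDA (measure_ne_top_of_subset hA hfin), ?_⟩
  calc volume.real A ≤ volume.real (D ∪ Icc a b ∪ {x}) := measureReal_mono hA hfin
    _ ≤ volume.real D + volume.real (Icc a b) + volume.real ({x} : Set ℝ) :=
      (measureReal_union_le _ _).trans (add_le_add_left (measureReal_union_le _ _) _)
    _ = volume.real D + (b - a) := by
      simp [Real.volume_real_Icc_of_le hab, measureReal_def]

def runningInfRange (X : ℝ → ℝ) (s : ℝ) : Set ℝ :=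
  {y | ∃ u ∈ Icc 0 s, y = sInf (X '' Icc u s)}

section runningInfRange

variable {X : ℝ → ℝ} {s t₁ t₂ a b : ℝ}

theorem runningInfRange_subset_Icc (hX : BddBelow (X '' Icc 0 s)) :
    runningInfRange X s ⊆ Icc (sInf (X '' Icc 0 s)) (X s) := by
  rintro _ ⟨u, hu, rfl⟩
  have hsub : X '' Icc u s ⊆ X '' Icc 0 s := image_mono (Icc_subset_Icc_left hu.1)
  exact ⟨csInf_le_csInf hX ((nonempty_Icc.2 hu.2).image X) hsub,
    csInf_le (hX.mono hsub) (mem_image_of_mem X ⟨hu.2, le_rfl⟩)⟩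

theorem runningInfRange_inter_Iio_subset (hX : BddBelow (X '' Icc 0 t₂)) (ht : t₁ ≤ t₂)
    (ha : ∀ r ∈ Icc t₁ t₂, a ≤ X r) :
    runningInfRange X t₁ ∩ Iio a ⊆ runningInfRange X t₂ := by
  rintro _ ⟨⟨u, hu, rfl⟩, hya⟩
  refine ⟨u, ⟨hu.1, hu.2.trans ht⟩, ?_⟩
  rw [csInf_image_Icc_eq_inf (hX.mono (image_mono (Icc_subset_Icc_left hu.1))) hu.2 ht,
    inf_eq_left.2 (hya.le.trans (le_csInf_image_Icc ht ha))]

theorem runningInfRange_subset_union (hX : BddBelow (X '' Icc 0 t₂)) (ht : t₁ < t₂)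
    (ha : ∀ r ∈ Icc t₁ t₂, a ≤ X r) (hb : ∀ r ∈ Ico t₁ t₂, X r ≤ b) :
    runningInfRange X t₂ ⊆ runningInfRange X t₁ ∩ Iio a ∪ Icc a b ∪ {X t₂} := by
  have hbdd : ∀ {u v}, 0 ≤ u → v ≤ t₂ → BddBelow (X '' Icc u v) := fun hu hv ↦
    hX.mono (image_mono (Icc_subset_Icc hu hv))
  rintro _ ⟨u, hu, rfl⟩
  rcases le_or_gt u t₁ with hut | hut
  · have hc : a ≤ sInf (X '' Icc t₁ t₂) := le_csInf_image_Icc ht.le ha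
    rw [csInf_image_Icc_eq_inf (hbdd hu.1 le_rfl) hut ht.le]
    rcases lt_or_ge (sInf (X '' Icc u t₁)) a with h | h
    · rw [inf_eq_left.2 (h.le.trans hc)]
      exact Or.inl (Or.inl ⟨⟨u, ⟨hu.1, hut⟩, rfl⟩, h⟩)
    · refine Or.inl (Or.inr ⟨le_inf h hc, inf_le_right.trans ?_⟩)
      exact (csInf_le (hbdd (hu.1.trans hut) le_rfl) (mem_image_of_mem X ⟨le_rfl, ht.le⟩)).trans
        (hb t₁ ⟨le_rfl, ht⟩)
  · rcases hu.2.eq_or_lt with rfl | hut₂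
    · exact Or.inr (by simp)
    · refine Or.inl (Or.inr
        ⟨le_csInf_image_Icc hu.2 fun r hr ↦ ha r ⟨hut.le.trans hr.1, hr.2⟩, ?_⟩)
      exact (csInf_le (hbdd hu.1 le_rfl) (mem_image_of_mem X ⟨le_rfl, hu.2⟩)).trans
        (hb u ⟨hut.le, hut₂⟩)

theorem dist_volume_runningInfRange_le (hX : BddBelow (X '' Icc 0 t₂)) (ht : t₁ < t₂)
    (ha : ∀ r ∈ Icc t₁ t₂, a ≤ X r) (hb : ∀ r ∈ Ico t₁ t₂, X r ≤ b) :
    dist (volume.real (runningInfRange X t₂)) (volume.real (runningInfRange X t₁)) ≤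
      b - a := by
  have hX₁ : BddBelow (X '' Icc 0 t₁) := hX.mono (image_mono (Icc_subset_Icc_right ht.le))
  have hXt₁ : X t₁ ≤ b := hb t₁ ⟨le_rfl, ht⟩
  have hab : a ≤ b := (ha t₁ ⟨le_rfl, ht.le⟩).trans hXt₁
  have hD : IsBounded (runningInfRange X t₁ ∩ Iio a) :=
    (Metric.isBounded_Icc _ _).subset (inter_subset_left.trans (runningInfRange_subset_Icc hX₁))
  have hY₁ := volume_real_mem_Icc_of_subset_union_Icc (x := X t₂) hD hab inter_subset_left
    fun y hy ↦ Or.inl <| (lt_or_ge y a).imp (fun h ↦ ⟨hy, h⟩)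
      fun h ↦ ⟨h, (runningInfRange_subset_Icc hX₁ hy).2.trans hXt₁⟩
  have hY₂ := volume_real_mem_Icc_of_subset_union_Icc hD hab
    (runningInfRange_inter_Iio_subset hX ht.le ha) (runningInfRange_subset_union hX ht ha hb)
  exact (Real.dist_le_of_mem_Icc hY₂ hY₁).trans_eq (by ring)

theorem continuousWithinAt_volume_runningInfRange_Icc {T : ℝ}
    (hX : BddBelow (X '' Icc 0 T)) (hright : ContinuousWithinAt X (Ici s) s) :
    ContinuousWithinAt (fun t ↦ volume.real (runningInfRange X t)) (Icc s T) s := by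
  refine Metric.tendsto_nhds.2 fun ε hε ↦ ?_
  obtain ⟨u, hsu, hu⟩ := mem_nhdsGE_iff_exists_Ico_subset.1
    (Metric.tendsto_nhds.1 hright (ε / 3) (by positivity))
  filter_upwards [self_mem_nhdsWithin, nhdsWithin_le_nhds (Iio_mem_nhds hsu)] with t ht htu
  rcases ht.1.eq_or_lt with rfl | hst
  · simpa using hε
  have hnear : ∀ r ∈ Icc s t, |X r - X s| < ε / 3 := fun r hr ↦ by
    simpa [Real.dist_eq] using hu ⟨hr.1, hr.2.trans_lt htu⟩
  refine (dist_volume_runningInfRange_le (a := X s - ε / 3) (b := X s + ε / 3)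
    (hX.mono (image_mono (Icc_subset_Icc_right ht.2))) hst
    (fun r hr ↦ by linarith [abs_lt.1 (hnear r hr)])
    (fun r hr ↦ by linarith [abs_lt.1 (hnear r (Ico_subset_Icc_self hr))])).trans_lt ?_
  linarith

theorem continuousWithinAt_volume_runningInfRange_Iic {L : ℝ}
    (hX : BddBelow (X '' Icc 0 s)) (hL : Tendsto X (𝓝[<] s) (𝓝 L)) (hLs : L ≤ X s) :
    ContinuousWithinAt (fun t ↦ volume.real (runningInfRange X t)) (Iic s) s := by
  refine Metric.tendsto_nhds.2 fun ε hε ↦ ?_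
  obtain ⟨l, hls, hl⟩ := mem_nhdsLT_iff_exists_Ioo_subset.1
    (Metric.tendsto_nhds.1 hL (ε / 3) (by positivity))
  filter_upwards [self_mem_nhdsWithin, nhdsWithin_le_nhds (Ioi_mem_nhds hls)] with t hts hlt
  rcases (mem_Iic.1 hts).eq_or_lt with rfl | hts
  · simpa using hε
  have hnear : ∀ r ∈ Ico t s, |X r - L| < ε / 3 := fun r hr ↦ by
    simpa [Real.dist_eq] using hl ⟨hlt.trans_le hr.1, hr.2⟩
  have ha : ∀ r ∈ Icc t s, L - ε / 3 ≤ X r := fun r hr ↦ by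
    rcases hr.2.eq_or_lt with rfl | hrs
    · linarith
    · linarith [abs_lt.1 (hnear r ⟨hr.1, hrs⟩)]
  rw [dist_comm]
  refine (dist_volume_runningInfRange_le (b := L + ε / 3) hX hts ha
    (fun r hr ↦ by linarith [abs_lt.1 (hnear r hr)])).trans_lt ?_
  linarith

end runningInfRange

/-- If `X` is càdlàg on `[0,1]` with no negative jumps, then
`Y s = m { inf_{u ≤ r ≤ s} X r : 0 ≤ u ≤ s }` is a continuous function of `s`. -/
theorem stmt3 (X : ℝ → ℝ)
    (hright : ∀ t ∈ Icc (0:ℝ) 1, ContinuousWithinAt X (Ici t) t)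
    (hleft : ∀ t ∈ Ioc (0:ℝ) 1, ∃ L : ℝ,
      Tendsto X (nhdsWithin t (Iio t)) (nhds L) ∧ L ≤ X t) :
    ContinuousOn (fun s : ℝ =>
      (volume {y : ℝ | ∃ u ∈ Icc (0:ℝ) s, y = sInf (X '' Icc u s)}).toReal)
      (Icc (0:ℝ) 1) := by
  have hX : BddBelow (X '' Icc 0 1) :=
    bddBelow_image_Icc_of_cadlag hright fun t ht ↦ (hleft t ht).imp fun _ ↦ And.left
  intro s hs
  rw [← Icc_union_Icc_eq_Icc hs.1 hs.2]
  refine ContinuousWithinAt.union ?_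
    (continuousWithinAt_volume_runningInfRange_Icc hX (hright s hs))
  rcases hs.1.eq_or_lt with rfl | hs₀
  · simp [continuousWithinAt_singleton]
  · obtain ⟨L, hL, hLs⟩ := hleft s ⟨hs₀, hs.2⟩
    exact (continuousWithinAt_volume_runningInfRange_Iic
      (hX.mono (image_mono (Icc_subset_Icc_right hs.2))) hL hLs).mono Icc_subset_Iic_self
end

section
/- Let X : [0,1] → ℝ be càdlàg with no negative jumps, and suppose t < t' are two jump times of X such that t' ∈ (t, T) where T = inf{s > t : X(s) = X(t−)} (assuming T exists and X(s) > X(t−) for s ∈ (t,T)). Then T' = inf{s > t' : X(s) = X(t'−)} also lies in (t, T); i.e. the excursion intervals (t,T) associated to distinct jumps are nested. -/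
/-!
Let `c = X⁻(t')`. Since `X(t') > c` and `X(T) = X⁻(t) < c`, the path must come down to level `c`
somewhere in `(t', T]`. With no negative jumps it cannot jump over `c` on the way down: at the
infimum `s₀` of `{s ∈ [t', T] : X(s) ≤ c}`, right continuity gives `X(s₀) ≤ c`, while `X > c` on `(t', s₀)`
gives `X(s₀) ≥ X⁻(s₀) ≥ c`. Hence `X(s₀) = c`, and `s₀ < T` because `X(T) ≠ c`; so the return
time `T'` of `t'` lies in `(t', s₀] ⊆ (t, T)`.
-/

open Set Filter Topology

lemma apply_csInf_le_of_continuousWithinAt_Ici {X : ℝ → ℝ} {A : Set ℝ} {c : ℝ}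
    (hne : A.Nonempty) (hbdd : BddBelow A)
    (hX : ContinuousWithinAt X (Ici (sInf A)) (sInf A)) (hA : ∀ s ∈ A, X s ≤ c) :
    X (sInf A) ≤ c :=
  (hX.mono fun _ hs => csInf_le hbdd hs).closure_le (csInf_mem_closure hne hbdd)
    continuousWithinAt_const hA

lemma exists_mem_Ioc_eq_of_no_neg_jumps {X Xm : ℝ → ℝ} {a b c : ℝ}
    (hright : ∀ s ∈ Icc a b, ContinuousWithinAt X (Ici s) s)
    (hleft : ∀ s ∈ Ioc a b, Tendsto X (𝓝[<] s) (𝓝 (Xm s)))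
    (hnoneg : ∀ s ∈ Ioc a b, Xm s ≤ X s)
    (hab : a ≤ b) (ha : c < X a) (hb : X b ≤ c) :
    ∃ s ∈ Ioc a b, X s = c := by
  set A : Set ℝ := {s | s ∈ Icc a b ∧ X s ≤ c}
  have hbA : b ∈ A := ⟨⟨hab, le_rfl⟩, hb⟩
  have hAbdd : BddBelow A := ⟨a, fun s hs => hs.1.1⟩
  set s₀ := sInf A
  have hs₀b : s₀ ≤ b := csInf_le hAbdd hbA
  have has₀ : a < s₀ := by
    obtain ⟨u, hau, hu⟩ := mem_nhdsGE_iff_exists_Ico_subset.1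
      ((hright a ⟨le_rfl, hab⟩).eventually (eventually_gt_nhds ha))
    refine hau.trans_le (le_csInf ⟨b, hbA⟩ fun s hs => ?_)
    by_contra! hsu
    exact hs.2.not_gt (hu ⟨hs.1.1, hsu⟩)
  have hs₀mem : s₀ ∈ Ioc a b := ⟨has₀, hs₀b⟩
  have habove : ∀ s ∈ Ioo a s₀, c < X s := fun s hs => by
    by_contra! hsc
    exact hs.2.not_ge (csInf_le hAbdd ⟨⟨hs.1.le, hs.2.le.trans hs₀b⟩, hsc⟩)
  have hcXm : c ≤ Xm s₀ :=
    ge_of_tendsto (hleft s₀ hs₀mem) <| by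
      filter_upwards [Ioo_mem_nhdsLT has₀] with s hs using (habove s hs).le
  have hXs₀ : X s₀ ≤ c :=
    apply_csInf_le_of_continuousWithinAt_Ici ⟨b, hbA⟩ hAbdd
      (hright s₀ ⟨has₀.le, hs₀b⟩) fun s hs => hs.2
  exact ⟨s₀, hs₀mem, le_antisymm hXs₀ (hcXm.trans (hnoneg s₀ hs₀mem))⟩

theorem stmt4_general (X Xm : ℝ → ℝ)
    (hright : ∀ t ∈ Icc (0:ℝ) 1, ContinuousWithinAt X (Ici t) t)
    (hleft : ∀ t ∈ Ioc (0:ℝ) 1, Tendsto X (nhdsWithin t (Iio t)) (nhds (Xm t)))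
    (hnoneg : ∀ t ∈ Ioc (0:ℝ) 1, Xm t ≤ X t)
    (t t' T : ℝ)
    (ht : t ∈ Ioc (0:ℝ) 1) (hT1 : T ≤ 1) (ht' : t' ∈ Ioo t T)
    (hjump' : Xm t' < X t')
    (hlevel : Xm t < Xm t')
    (hTval : X T = Xm t) :
    sInf {s : ℝ | t' < s ∧ X s = Xm t'} ∈ Ioo t T := by
  have ht'0 : 0 < t' := ht.1.trans ht'.1
  have hIcc : Icc t' T ⊆ Icc 0 1 := Icc_subset_Icc ht'0.le hT1
  have hIoc : Ioc t' T ⊆ Ioc 0 1 := Ioc_subset_Ioc ht'0.le hT1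
  obtain ⟨s, ⟨ht's, hsT⟩, hXs⟩ := exists_mem_Ioc_eq_of_no_neg_jumps
    (fun s hs => hright s (hIcc hs)) (fun s hs => hleft s (hIoc hs))
    (fun s hs => hnoneg s (hIoc hs)) ht'.2.le hjump' (hTval.trans_le hlevel.le)
  have hsT' : s < T := hsT.lt_of_ne <| by
    rintro rfl
    exact hlevel.ne (hTval.symm.trans hXs)
  have hsS : s ∈ {s : ℝ | t' < s ∧ X s = Xm t'} := ⟨ht's, hXs⟩
  exact ⟨ht'.1.trans_le (le_csInf ⟨s, hsS⟩ fun _ hr => hr.1.le),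
    (csInf_le ⟨t', fun _ hr => hr.1.le⟩ hsS).trans_lt hsT'⟩

/-- Nesting of excursion intervals: if `X` is càdlàg on `[0,1]` with no negative jumps
(`Xm t` denoting the left limit at `t`), `t` is a jump time with first return time
`T = inf{s > t : X s = Xm t}` and `X > Xm t` on `(t,T)`, and `t' ∈ (t,T)` is another
jump time (with pre-jump level `Xm t' > Xm t`), then
`T' = inf{s > t' : X s = Xm t'}` also lies in `(t,T)`. -/
theorem stmt4 (X Xm : ℝ → ℝ)
    (hright : ∀ t ∈ Icc (0:ℝ) 1, ContinuousWithinAt X (Ici t) t)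
    (hleft : ∀ t ∈ Ioc (0:ℝ) 1, Tendsto X (nhdsWithin t (Iio t)) (nhds (Xm t)))
    (hnoneg : ∀ t ∈ Ioc (0:ℝ) 1, Xm t ≤ X t)
    (t t' T : ℝ)
    (ht : t ∈ Ioc (0:ℝ) 1) (hT1 : T ≤ 1) (ht' : t' ∈ Ioo t T)
    (hjump : Xm t < X t) (hjump' : Xm t' < X t')
    (hlevel : Xm t < Xm t')
    (hTdef : T = sInf {s : ℝ | t < s ∧ X s = Xm t})
    (hTval : X T = Xm t)
    (habove : ∀ s ∈ Ioo t T, Xm t < X s) :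
    sInf {s : ℝ | t' < s ∧ X s = Xm t'} ∈ Ioo t T :=
  stmt4_general X Xm hright hleft hnoneg t t' T ht hT1 ht' hjump' hlevel hTval
end

section
/- In the breadth-first construction of a tree from a configuration of n particles at distinct positions x₁,…,xₙ on the circle of unit circumference with weights p₁,…,pₙ summing to 1: let F(u) = −u + Σᵢ pᵢ·1{xᵢ ≤ u}, assume F attains its infimum (of left limits) uniquely at the position x_{v₁} of particle v₁, order particles v₁, v₂, …, vₙ cyclically starting from x_{v₁}, and set y(1) = x_{v₁}, y(j+1) = y(j) + p_{v_j} mod 1. Then for every 2 ≤ j ≤ n, the position x_{v_j} lies in the interval [y(1), y(j)) (taken mod 1). -/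
open Set Finset

/-!
Write `G(u) = -u + ∑_{xᵢ < u} pᵢ` for the left limit of `F`, and `a = x_{v₁}`. Since the total
mass is `1`, the mass of the particles in the arc `[a, b)` of the circle is
`G(b) - G(a) + |[a, b)|`. For `b = x_{v_j}` this mass is `∑_{k<j} p_{v_k}` by the cyclic
ordering, and `G(b) > G(a)` because `a` is the unique minimizer; hence the arc length
`|[a, b)|` is smaller than `∑_{k<j} p_{v_k} = y(j) - y(1)`.
-/

lemma Int.fract_sub_of_mem_Ico {a b : ℝ} (ha : a ∈ Ico (0 : ℝ) 1) (hb : b ∈ Ico (0 : ℝ) 1) :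
    Int.fract (b - a) = b - a + if b < a then 1 else 0 := by
  split_ifs with h
  · rw [← Int.fract_add_one, Int.fract_eq_self]
    constructor <;> linarith [ha.2, hb.1]
  · rw [add_zero, Int.fract_eq_self]
    constructor <;> linarith [ha.1, hb.2, not_lt.mp h]

noncomputable def leftLimitF {ι : Type*} [Fintype ι] (x p : ι → ℝ) (u : ℝ) : ℝ :=
  -u + ∑ i, if x i < u then p i else 0

lemma sum_ite_fract_sub_lt_eq {ι : Type*} [Fintype ι] {x p : ι → ℝ}
    (hx : ∀ i, x i ∈ Ico (0 : ℝ) 1) (hsum : ∑ i, p i = 1)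
    {a b : ℝ} (ha : a ∈ Ico (0 : ℝ) 1) (hb : b ∈ Ico (0 : ℝ) 1) :
    ∑ i, (if Int.fract (x i - a) < Int.fract (b - a) then p i else 0)
      = leftLimitF x p b - leftLimitF x p a + Int.fract (b - a) := by
  have hterm : ∀ i, (if Int.fract (x i - a) < Int.fract (b - a) then p i else 0)
      = (if x i < b then p i else 0) - (if x i < a then p i else 0)
        + (if b < a then 1 else 0) * p i := by
    intro i
    rw [Int.fract_sub_of_mem_Ico ha (hx i), Int.fract_sub_of_mem_Ico ha hb]
    split_ifs <;> linarith [(hx i).1, (hx i).2, ha.1, ha.2, hb.1, hb.2]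
  rw [Finset.sum_congr rfl fun i _ => hterm i, Finset.sum_add_distrib, Finset.sum_sub_distrib,
    ← Finset.mul_sum, hsum, Int.fract_sub_of_mem_Ico ha hb, leftLimitF, leftLimitF]
  ring

lemma sum_Iio_eq_sum_ite_lt_of_strictMono {ι α M : Type*} [Fintype ι] [LinearOrder ι]
    [LocallyFiniteOrderBot ι] [LinearOrder α] [AddCommMonoid M] {f : ι → α} (hf : StrictMono f)
    (g : ι → M) (j : ι) :
    ∑ k ∈ Iio j, g k = ∑ k, if f k < f j then g k else 0 := by
  simp_rw [hf.lt_iff_lt, ← Finset.sum_filter]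
  congr 1
  ext k
  simp

theorem stmt6_general (n : ℕ) (hn : 0 < n) (x p : Fin n → ℝ)
    (hx : ∀ i, x i ∈ Ico (0:ℝ) 1)
    (hsum : ∑ i, p i = 1)
    (v : Fin n → Fin n) (hv : Function.Bijective v)
    (hord : StrictMono fun j : Fin n => Int.fract (x (v j) - x (v ⟨0, hn⟩)))
    (hmin : ∀ w : Fin n, w ≠ v ⟨0, hn⟩ →
      (-(x (v ⟨0, hn⟩)) + ∑ i, if x i < x (v ⟨0, hn⟩) then p i else 0)
        < -(x w) + ∑ i, if x i < x w then p i else 0) :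
    ∀ j : Fin n, 0 < (j : ℕ) →
      Int.fract (x (v j) - x (v ⟨0, hn⟩)) ∈
        Ico (0:ℝ) (∑ k ∈ Finset.Iio j, p (v k)) := by
  intro j hj
  have hne : v j ≠ v ⟨0, hn⟩ := fun h => by
    simp [Fin.ext_iff.mp (hv.injective h)] at hj
  have hmass : ∑ k ∈ Iio j, p (v k) = leftLimitF x p (x (v j)) - leftLimitF x p (x (v ⟨0, hn⟩))
      + Int.fract (x (v j) - x (v ⟨0, hn⟩)) := by
    rw [sum_Iio_eq_sum_ite_lt_of_strictMono hord,
      Fintype.sum_bijective v hv _ (fun i => if Int.fract (x i - x (v ⟨0, hn⟩))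
        < Int.fract (x (v j) - x (v ⟨0, hn⟩)) then p i else 0) fun _ => rfl,
      sum_ite_fract_sub_lt_eq hx hsum (hx _) (hx _)]
  have hgap := hmin (v j) hne
  rw [← leftLimitF, ← leftLimitF] at hgap
  exact ⟨Int.fract_nonneg _, by linarith⟩

/-- Breadth-first construction: working in coordinates shifted so that the position
`x (v 0)` of the unique minimizer of the left-limit of
`F(u) = -u + ∑ᵢ pᵢ 1{xᵢ ≤ u}` is the origin of the circle (so the position of
particle `v j` is `Int.fract (x (v j) - x (v 0))` and `y j - y 0 = ∑_{k<j} p (v k)`),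
the position of the `j`-th particle lies in `[y 0, y j)`, i.e.
`Int.fract (x (v j) - x (v 0)) ∈ [0, ∑_{k<j} p (v k))` for all `j ≥ 1`. -/
theorem stmt6 (n : ℕ) (hn : 0 < n) (x p : Fin n → ℝ)
    (hx : ∀ i, x i ∈ Ico (0:ℝ) 1) (hxinj : Function.Injective x)
    (hp : ∀ i, 0 < p i) (hsum : ∑ i, p i = 1)
    (v : Fin n → Fin n) (hv : Function.Bijective v)
    (hord : StrictMono fun j : Fin n => Int.fract (x (v j) - x (v ⟨0, hn⟩)))
    (hmin : ∀ w : Fin n, w ≠ v ⟨0, hn⟩ →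
      (-(x (v ⟨0, hn⟩)) + ∑ i, if x i < x (v ⟨0, hn⟩) then p i else 0)
        < -(x w) + ∑ i, if x i < x w then p i else 0) :
    ∀ j : Fin n, 0 < (j : ℕ) →
      Int.fract (x (v j) - x (v ⟨0, hn⟩)) ∈
        Ico (0:ℝ) (∑ k ∈ Finset.Iio j, p (v k)) :=
  stmt6_general n hn x p hx hsum v hv hord hmin
end

section
/- In the breadth-first construction above (same assumptions), the directed graph on [n] defined by declaring that the children of v_j are the particles v with x_v ∈ (y(j), y(j+1)) (mod 1), with root v₁, is a tree on [n] rooted at v₁: it is acyclic and connected. -/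
open Set Finset

/-!
Measure positions relative to the root, `F i = fract (x i - x r)`. Rotating the circle by `x r`
changes the discrepancy "mass strictly below `t` minus `t`" only by a constant, so minimality of
the root makes the rotated discrepancy nonnegative: `F (v k) ≤ y k`. Hence if `v j` is a child of
`v k` then `F (v k) ≤ y k < F (v j)`, i.e. `k < j`; parents have smaller indices, so iterating the
parent map descends to the root.
-/

noncomputable def massBelow {ι : Type*} [Fintype ι] (p x : ι → ℝ) (t : ℝ) : ℝ :=
  ∑ i, if x i < t then p i else 0

theorem Int.fract_sub_eq_of_mem_Ico {a c : ℝ} (ha : a ∈ Ico (0 : ℝ) 1)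
    (hc : c ∈ Ico (0 : ℝ) 1) :
    Int.fract (a - c) = a - c + if a < c then 1 else 0 := by
  obtain ⟨ha0, ha1⟩ := ha
  obtain ⟨hc0, hc1⟩ := hc
  rw [Int.fract_eq_iff]
  split_ifs with hac
  · exact ⟨by linarith, by linarith, -1, by push_cast; ring⟩
  · exact ⟨by linarith, by linarith, 0, by push_cast; ring⟩

theorem ite_fract_sub_lt_fract_sub {a t c : ℝ} (ha : a ∈ Ico (0 : ℝ) 1)
    (ht : t ∈ Ico (0 : ℝ) 1) (hc : c ∈ Ico (0 : ℝ) 1) (q : ℝ) :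
    (if Int.fract (a - c) < Int.fract (t - c) then q else 0) =
      (if a < t then q else 0) - (if a < c then q else 0) + (if t < c then q else 0) := by
  rw [Int.fract_sub_eq_of_mem_Ico ha hc, Int.fract_sub_eq_of_mem_Ico ht hc]
  obtain ⟨ha0, ha1⟩ := ha
  obtain ⟨ht0, ht1⟩ := ht
  split_ifs <;> linarith

section Rotation

variable {ι : Type*} [Fintype ι] {p x : ι → ℝ}

theorem massBelow_fract_sub_sub_fract_sub (hx : ∀ i, x i ∈ Ico (0 : ℝ) 1)
    (hsum : ∑ i, p i = 1) {t c : ℝ} (ht : t ∈ Ico (0 : ℝ) 1) (hc : c ∈ Ico (0 : ℝ) 1) :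
    massBelow p (fun i => Int.fract (x i - c)) (Int.fract (t - c)) - Int.fract (t - c) =
      (massBelow p x t - t) - (massBelow p x c - c) := by
  have hsplit : massBelow p (fun i => Int.fract (x i - c)) (Int.fract (t - c)) =
      massBelow p x t - massBelow p x c + if t < c then 1 else 0 := by
    simp only [massBelow, ite_fract_sub_lt_fract_sub (hx _) ht hc, sum_add_distrib,
      sum_sub_distrib, sum_ite_irrel, hsum, sum_const_zero]
  rw [hsplit, Int.fract_sub_eq_of_mem_Ico ht hc]
  ring

theorem fract_sub_le_massBelow_of_isMin (hx : ∀ i, x i ∈ Ico (0 : ℝ) 1)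
    (hsum : ∑ i, p i = 1)
    {r : ι} (hr : ∀ w, -x r + massBelow p x (x r) ≤ -x w + massBelow p x (x w)) (w : ι) :
    Int.fract (x w - x r) ≤
      massBelow p (fun i => Int.fract (x i - x r)) (Int.fract (x w - x r)) := by
  have := massBelow_fract_sub_sub_fract_sub hx hsum (hx w) (hx r)
  linarith [hr w]

end Rotation

theorem sum_Iio_eq_massBelow {ι κ : Type*} [Fintype ι] [LinearOrder ι]
    [LocallyFiniteOrderBot ι] [Fintype κ] {v : ι → κ} (hv : Function.Bijective v) {f : κ → ℝ}
    (hf : StrictMono fun l => f (v l)) (q : κ → ℝ) (k : ι) :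
    ∑ l ∈ Finset.Iio k, q (v l) = massBelow q f (f (v k)) := by
  have hIio : Finset.Iio k = univ.filter (fun l => f (v l) < f (v k)) := by
    ext l
    simp [hf.lt_iff_lt]
  rw [hIio, sum_filter, massBelow]
  exact Fintype.sum_bijective v hv _ _ fun _ => rfl

theorem exists_iterate_eq_of_forall_exists_lt {ι α : Type*} [Preorder ι] [WellFoundedLT ι]
    {v : ι → α} {par : α → α} {j₀ : ι} (hpar : ∀ j, j ≠ j₀ → ∃ k < j, par (v j) = v k)
    (j : ι) :
    ∃ m : ℕ, par^[m] (v j) = v j₀ := by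
  induction j using WellFoundedLT.induction with
  | _ j ih =>
    by_cases hj : j = j₀
    · exact ⟨0, by rw [hj]; rfl⟩
    obtain ⟨k, hkj, hk⟩ := hpar j hj
    obtain ⟨m, hm⟩ := ih k hkj
    exact ⟨m + 1, by rw [Function.iterate_succ_apply, hk, hm]⟩

theorem stmt7_general (n : ℕ) (hn : 0 < n) (x p : Fin n → ℝ)
    (hx : ∀ i, x i ∈ Ico (0:ℝ) 1)
    (hsum : ∑ i, p i = 1)
    (v : Fin n → Fin n) (hv : Function.Bijective v)
    (hord : StrictMono fun j : Fin n => Int.fract (x (v j) - x (v ⟨0, hn⟩)))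
    (hmin : ∀ w : Fin n, w ≠ v ⟨0, hn⟩ →
      (-(x (v ⟨0, hn⟩)) + ∑ i, if x i < x (v ⟨0, hn⟩) then p i else 0)
        < -(x w) + ∑ i, if x i < x w then p i else 0)
    (par : Fin n → Fin n)
    (hpar : ∀ j : Fin n, 0 < (j : ℕ) → ∃ k : Fin n, par (v j) = v k ∧
      Int.fract (x (v j) - x (v ⟨0, hn⟩)) ∈
        Ioo (∑ l ∈ Finset.Iio k, p (v l)) (∑ l ∈ Finset.Iic k, p (v l))) :
    ∀ w : Fin n, ∃ m : ℕ, par^[m] w = v ⟨0, hn⟩ := by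
  have hroot_min : ∀ w, -x (v ⟨0, hn⟩) + massBelow p x (x (v ⟨0, hn⟩)) ≤
      -x w + massBelow p x (x w) := fun w => by
    rcases eq_or_ne w (v ⟨0, hn⟩) with rfl | hw
    · exact le_rfl
    · exact (hmin w hw).le
  have hpos_le_y : ∀ k, Int.fract (x (v k) - x (v ⟨0, hn⟩)) ≤ ∑ l ∈ Finset.Iio k, p (v l) :=
    fun k => by
      rw [sum_Iio_eq_massBelow hv (f := fun i => Int.fract (x i - x (v ⟨0, hn⟩))) hord]
      exact fract_sub_le_massBelow_of_isMin hx hsum hroot_min (v k)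
  have hparent_lt : ∀ j, j ≠ ⟨0, hn⟩ → ∃ k < j, par (v j) = v k := fun j hj => by
    obtain ⟨k, hk, hjk, -⟩ := hpar j (Nat.pos_of_ne_zero fun h => hj (Fin.ext h))
    exact ⟨k, hord.lt_iff_lt.mp ((hpos_le_y k).trans_lt hjk), hk⟩
  intro w
  obtain ⟨j, rfl⟩ := hv.2 w
  exact exists_iterate_eq_of_forall_exists_lt hparent_lt j

/-- Breadth-first construction: the directed graph in which the parent of the particle
`v j` (for `j ≥ 1`) is the particle `v k` such that the (shifted) position of `v j`
lies in `(y k, y (k+1)) = (∑_{l<k} p (v l), ∑_{l≤k} p (v l))` is a tree rooted at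
`v 0`: from every vertex, iterating the parent map reaches the root. -/
theorem stmt7 (n : ℕ) (hn : 0 < n) (x p : Fin n → ℝ)
    (hx : ∀ i, x i ∈ Ico (0:ℝ) 1) (hxinj : Function.Injective x)
    (hp : ∀ i, 0 < p i) (hsum : ∑ i, p i = 1)
    (v : Fin n → Fin n) (hv : Function.Bijective v)
    (hord : StrictMono fun j : Fin n => Int.fract (x (v j) - x (v ⟨0, hn⟩)))
    (hmin : ∀ w : Fin n, w ≠ v ⟨0, hn⟩ →
      (-(x (v ⟨0, hn⟩)) + ∑ i, if x i < x (v ⟨0, hn⟩) then p i else 0)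
        < -(x w) + ∑ i, if x i < x w then p i else 0)
    (par : Fin n → Fin n)
    (hpar : ∀ j : Fin n, 0 < (j : ℕ) → ∃ k : Fin n, par (v j) = v k ∧
      Int.fract (x (v j) - x (v ⟨0, hn⟩)) ∈
        Ioo (∑ l ∈ Finset.Iio k, p (v l)) (∑ l ∈ Finset.Iic k, p (v l))) :
    ∀ w : Fin n, ∃ m : ℕ, par^[m] w = v ⟨0, hn⟩ :=
  stmt7_general n hn x p hx hsum v hv hord hmin par hpar
end

section
/- In the depth-first construction of a tree from particle positions and weights, for each vertex v let e(v) be the time at which the examination of v finishes, and let N(v) be the set consisting of all children of v together with all later siblings of the ancestors of v (later in the order of children). Then F^exc(e(v)) = Σ_{w ∈ N(v)} p_w for every vertex v. -/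
/-!
Up to the end `S k = ∑_{l ≤ k} p (w l)` of the examination of `w k`, every vertex examined so far
has its shifted position before `S k`, so these weights cancel the `- S k` in `Fexc (S k)`.
A later vertex `w m` (`k < m`) lies in the examination interval of its parent `w j`, hence before
`S k` exactly when `j ≤ k`. Because the descendants of `w j` form the block of indices starting
at `j`, which contains `m > k`, the condition `j ≤ k` says that `w j` is an ancestor of `w k`;
and `w m`, being examined after `w k`, is not one.
-/

open Set Finset

section PartialSums

variable {α M : Type*} [LinearOrder α] [LocallyFiniteOrderBot α]
  [AddCommMonoid M] [PartialOrder M] [IsOrderedAddMonoid M] {q : α → M}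

theorem monotone_sum_Iic (hq : ∀ l, 0 ≤ q l) : Monotone fun j => ∑ l ∈ Iic j, q l :=
  fun _ _ hab => sum_le_sum_of_subset_of_nonneg (Iic_subset_Iic.mpr hab) fun l _ _ => hq l

theorem sum_Iic_le_sum_Iio (hq : ∀ l, 0 ≤ q l) {a b : α} (hab : a < b) :
    ∑ l ∈ Iic a, q l ≤ ∑ l ∈ Iio b, q l :=
  sum_le_sum_of_subset_of_nonneg (fun _ hl => mem_Iio.2 ((mem_Iic.1 hl).trans_lt hab))
    fun l _ _ => hq l

theorem le_sum_Iic_iff_of_mem_Ioo (hq : ∀ l, 0 ≤ q l) {t : M} {j : α}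
    (ht : t ∈ Set.Ioo (∑ l ∈ Iio j, q l) (∑ l ∈ Iic j, q l)) (k : α) :
    t ≤ ∑ l ∈ Iic k, q l ↔ j ≤ k := by
  refine ⟨fun htk => ?_, fun hjk => ht.2.le.trans (monotone_sum_Iic hq hjk)⟩
  by_contra! hkj
  exact (htk.trans (sum_Iic_le_sum_Iio hq hkj)).not_gt ht.1

end PartialSums

theorem sum_ite_sub_sum_Iic {α M : Type*} [Fintype α] [LinearOrder α] [LocallyFiniteOrderBot α]
    [AddCommGroup M] (P : α → Prop) [DecidablePred P] (q : α → M) {k : α}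
    (hP : ∀ m ≤ k, P m) :
    ∑ m, (if P m then q m else 0) - ∑ m ∈ Finset.Iic k, q m =
      ∑ m ∈ univ.filter (fun m => k < m ∧ P m), q m := by
  have hle : (univ.filter P).filter (· ≤ k) = Finset.Iic k := by
    ext m
    simpa using hP m
  have hgt : (univ.filter P).filter (fun m => ¬ m ≤ k) = univ.filter (fun m => k < m ∧ P m) := by
    ext m
    simp [and_comm]
  rw [← sum_filter, ← sum_filter_add_sum_filter_not _ (· ≤ k), hle, hgt, add_sub_cancel_left]

theorem rel_iff_le_of_rel_of_lt {n : ℕ} {D : Fin n → Fin n → Prop} {c : Fin n → ℕ}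
    (hD : ∀ j k, D j k ↔ j ≤ k ∧ (k : ℕ) < j + c j) {j k m : Fin n} (hjm : D j m)
    (hkm : k < m) : D j k ↔ j ≤ k :=
  ⟨fun h => ((hD j k).1 h).1,
    fun hjk => (hD j k).2 ⟨hjk, (Fin.lt_def.1 hkm).trans ((hD j m).1 hjm).2⟩⟩

open scoped Classical in
theorem stmt9_general (n : ℕ) (hn : 0 < n) (x p : Fin n → ℝ)
    (hp : ∀ i, 0 < p i)
    (w : Fin n → Fin n) (hw : Function.Bijective w)
    (par : Fin n → Fin n)
    (hpar : ∀ k : Fin n, 0 < (k : ℕ) → ∃ j : Fin n, par (w k) = w j ∧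
      Int.fract (x (w k) - x (w ⟨0, hn⟩)) ∈
        Ioo (∑ l ∈ Finset.Iio j, p (w l)) (∑ l ∈ Finset.Iic j, p (w l)))
    (hdfs : ∀ j k : Fin n, (∃ r : ℕ, par^[r] (w k) = w j) ↔
      (j ≤ k ∧ (k : ℕ) < (j : ℕ) +
        (Finset.univ.filter fun m : Fin n => ∃ r : ℕ, par^[r] (w m) = w j).card))
    (Fexc : ℝ → ℝ)
    (hFexc : ∀ u : ℝ, Fexc u =
      (∑ i, if Int.fract (x i - x (w ⟨0, hn⟩)) ≤ u then p i else 0) - u) :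
    ∀ k : Fin n,
      Fexc (∑ l ∈ Finset.Iic k, p (w l)) =
        ∑ m ∈ Finset.univ.filter (fun m : Fin n => k < m ∧
          (∃ r : ℕ, par^[r] (w k) = par (w m)) ∧
          ¬ ∃ r : ℕ, par^[r] (w k) = w m), p (w m) := by
  intro k
  set y : Fin n → ℝ := fun m => Int.fract (x (w m) - x (w ⟨0, hn⟩))
  have hq : ∀ l, 0 ≤ p (w l) := fun l => (hp _).le
  have before_end_iff : ∀ m : Fin n, 0 < (m : ℕ) →
      ∃ j, par (w m) = w j ∧ (y m ≤ ∑ l ∈ Iic k, p (w l) ↔ j ≤ k) := by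
    intro m hm
    obtain ⟨j, hj, hpos⟩ := hpar m hm
    exact ⟨j, hj, le_sum_Iic_iff_of_mem_Ioo hq hpos k⟩
  have examined_before_end : ∀ m ≤ k, y m ≤ ∑ l ∈ Iic k, p (w l) := by
    intro m hmk
    rcases Nat.eq_zero_or_pos m with hm | hm
    · simp only [y, show m = ⟨0, hn⟩ from Fin.ext hm, sub_self, Int.fract_zero]
      exact sum_nonneg fun l _ => hq l
    · obtain ⟨j, hj, hiff⟩ := before_end_iff m hm
      exact hiff.2 (((hdfs j m).1 ⟨1, hj⟩).1.trans hmk)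
  rw [hFexc, ← hw.sum_comp, sum_ite_sub_sum_Iic _ _ examined_before_end]
  refine sum_congr (filter_congr fun m _ => and_congr_right fun hkm => ?_) fun _ _ => rfl
  obtain ⟨j, hj, hiff⟩ := before_end_iff m (Nat.zero_le k |>.trans_lt hkm)
  have not_ancestor : ¬ ∃ r : ℕ, par^[r] (w k) = w m := fun h => hkm.not_ge ((hdfs m k).1 h).1
  rw [hj, hiff, ← rel_iff_le_of_rel_of_lt hdfs ⟨1, hj⟩ hkm]
  exact ⟨fun h => ⟨h, not_ancestor⟩, And.left⟩

open scoped Classical in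
/-- Depth-first construction: `w 0, w 1, …` is the depth-first order (descendants of
each vertex form a consecutive block, hypothesis `hdfs`), the parent of `w k` is the
vertex `w j` whose examination interval `(∑_{l<j} p (w l), ∑_{l≤j} p (w l))` contains
the shifted position of `w k` (hypothesis `hpar`), and the examination of `w k`
finishes at time `e (w k) = ∑_{l ≤ k} p (w l)`.  Then `Fexc (e (w k))` equals the
total weight of `N (w k)`, the set of children of `w k` together with the later
siblings of its ancestors, i.e. of the vertices `w m` with `m > k` whose parent is an
ancestor of `w k` or `w k` itself and which are not themselves ancestors of `w k`. -/
theorem stmt9 (n : ℕ) (hn : 0 < n) (x p : Fin n → ℝ)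
    (hx : ∀ i, x i ∈ Ico (0:ℝ) 1) (hxinj : Function.Injective x)
    (hp : ∀ i, 0 < p i) (hsum : ∑ i, p i = 1)
    (w : Fin n → Fin n) (hw : Function.Bijective w)
    (par : Fin n → Fin n)
    (hroot : par (w ⟨0, hn⟩) = w ⟨0, hn⟩)
    (hpar : ∀ k : Fin n, 0 < (k : ℕ) → ∃ j : Fin n, par (w k) = w j ∧
      Int.fract (x (w k) - x (w ⟨0, hn⟩)) ∈
        Ioo (∑ l ∈ Finset.Iio j, p (w l)) (∑ l ∈ Finset.Iic j, p (w l)))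
    (hdfs : ∀ j k : Fin n, (∃ r : ℕ, par^[r] (w k) = w j) ↔
      (j ≤ k ∧ (k : ℕ) < (j : ℕ) +
        (Finset.univ.filter fun m : Fin n => ∃ r : ℕ, par^[r] (w m) = w j).card))
    (Fexc : ℝ → ℝ)
    (hFexc : ∀ u : ℝ, Fexc u =
      (∑ i, if Int.fract (x i - x (w ⟨0, hn⟩)) ≤ u then p i else 0) - u) :
    ∀ k : Fin n,
      Fexc (∑ l ∈ Finset.Iic k, p (w l)) =
        ∑ m ∈ Finset.univ.filter (fun m : Fin n => k < m ∧
          (∃ r : ℕ, par^[r] (w k) = par (w m)) ∧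
          ¬ ∃ r : ℕ, par^[r] (w k) = w m), p (w m) :=
  stmt9_general n hn x p hp w hw par hpar hdfs Fexc hFexc
end

section
/- Let p = (p₁,…,pₙ) be a probability vector with all pᵢ > 0, and define the p-tree distribution on rooted trees on vertex set [n] by P(T = t) = Π_v p_v^{d_v(t)}, where d_v(t) is the in-degree (number of children) of v in t. This defines a probability distribution: Σ_{t rooted tree on [n]} Π_v p_v^{d_v(t)} = 1. -/
open Finset

section PTreeAux

open Function
open scoped Classical

variable {n : ℕ}

/-- `w` reaches `r` under iteration of `g`. -/
def PTreach (g : Fin n → Fin n) (w r : Fin n) : Prop := ∃ k, g^[k] w = r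

/-- `g` is (the parent map of) a forest with root set `R`: roots are fixed and every
vertex reaches a root. -/
def PTgood (R : Finset (Fin n)) (g : Fin n → Fin n) : Prop :=
  (∀ r ∈ R, g r = r) ∧ ∀ v, ∃ r ∈ R, PTreach g v r

/-- The weight of a forest: product of `p (g w)` over non-roots `w`. -/
noncomputable def PTWt (p : Fin n → ℝ) (R : Finset (Fin n)) (g : Fin n → Fin n) : ℝ :=
  ∏ w ∈ Rᶜ, p (g w)

/-- Total weight of forests rooted at `R`. -/
noncomputable def PTFw (p : Fin n → ℝ) (R : Finset (Fin n)) : ℝ :=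
  ∑ g : Fin n → Fin n, if PTgood R g then PTWt p R g else 0

/-- Total weight of forests rooted at `R` in which `x` lies in the tree of root `r`. -/
noncomputable def PTGw (p : Fin n → ℝ) (R : Finset (Fin n)) (r x : Fin n) : ℝ :=
  ∑ g : Fin n → Fin n, if PTgood R g ∧ PTreach g x r then PTWt p R g else 0

lemma PTreach_refl (g : Fin n → Fin n) (w : Fin n) : PTreach g w w := ⟨0, rfl⟩

lemma PTreach_step {g : Fin n → Fin n} {x r : Fin n} (h : PTreach g (g x) r) :
    PTreach g x r := by
  obtain ⟨k, hk⟩ := h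
  exact ⟨k + 1, by rw [iterate_succ_apply]; exact hk⟩

lemma PTreach_trans {g : Fin n → Fin n} {a b c : Fin n} (h₁ : PTreach g a b)
    (h₂ : PTreach g b c) : PTreach g a c := by
  obtain ⟨k, hk⟩ := h₁; obtain ⟨l, hl⟩ := h₂
  exact ⟨l + k, by rw [iterate_add_apply, hk, hl]⟩

lemma PTfixed_reach {g : Fin n → Fin n} {w r : Fin n} (hw : g w = w) (h : PTreach g w r) :
    r = w := by
  obtain ⟨k, hk⟩ := h
  rw [iterate_fixed hw] at hk; exact hk.symm

lemma PTreach_of_fixed_le {g : Fin n → Fin n} {w r : Fin n} (hr : g r = r) {k l : ℕ}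
    (hk : g^[k] w = r) (hkl : k ≤ l) : g^[l] w = r := by
  rw [← Nat.sub_add_cancel hkl, iterate_add_apply, hk, iterate_fixed hr]

lemma PTreach_uniq {g : Fin n → Fin n} {w r₁ r₂ : Fin n} (h₁ : g r₁ = r₁) (h₂ : g r₂ = r₂)
    (hw₁ : PTreach g w r₁) (hw₂ : PTreach g w r₂) : r₁ = r₂ := by
  obtain ⟨k, hk⟩ := hw₁; obtain ⟨l, hl⟩ := hw₂
  rcases le_total k l with h | h
  · rw [← PTreach_of_fixed_le h₁ hk h, hl]
  · rw [← PTreach_of_fixed_le h₂ hl h, hk]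

lemma PTiterate_congr_of_avoid {f₁ f₂ : Fin n → Fin n} {x : Fin n}
    (h : ∀ y, y ≠ x → f₁ y = f₂ y) {k : ℕ} {w : Fin n}
    (hw : ∀ j, j < k → f₁^[j] w ≠ x) : f₁^[k] w = f₂^[k] w := by
  induction k with
  | zero => rfl
  | succ k ih =>
    rw [iterate_succ_apply', iterate_succ_apply',
      ← ih (fun j hj => hw j (hj.trans (Nat.lt_succ_self k)))]
    exact h _ (hw k (Nat.lt_succ_self k))

/-- Transfer reachability from `g'` (fixing `x`) to `update g' x v`. -/
lemma PTreach_update_of_reach {g' : Fin n → Fin n} {x v : Fin n} (hx : g' x = x)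
    {w r : Fin n} (h : PTreach g' w r) : PTreach (update g' x v) w r := by
  have hmin := Nat.find_spec h
  refine ⟨Nat.find h, ?_⟩
  rw [← PTiterate_congr_of_avoid (f₂ := update g' x v) (x := x)
    (fun y hy => (update_of_ne hy _ _).symm) ?_]
  · exact hmin
  · intro j hj hjx
    by_cases hrx : r = x
    · exact Nat.find_min h hj (hrx ▸ hjx)
    · exact hrx (by rw [← hmin, ← PTreach_of_fixed_le hx hjx hj.le])

/-- Transfer reachability from `update g' x v` back to `g'`: either the original target,
or the trajectory hits `x`. -/
lemma PTreach_or_of_reach_update {g' : Fin n → Fin n} {x v : Fin n} {w r : Fin n}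
    (h : PTreach (update g' x v) w r) : PTreach g' w r ∨ PTreach g' w x := by
  set g := update g' x v with hg
  by_cases hex : ∃ j, g^[j] w = x
  · right
    refine ⟨Nat.find hex, ?_⟩
    rw [← PTiterate_congr_of_avoid (f₂ := g') (x := x)
      (fun y hy => (update_of_ne hy _ _)) (fun j hj => Nat.find_min hex hj)]
    exact Nat.find_spec hex
  · left
    push_neg at hex
    obtain ⟨k, hk⟩ := h
    exact ⟨k, by rw [← PTiterate_congr_of_avoid (f₂ := g') (x := x)
      (fun y hy => (update_of_ne hy _ _)) (fun j _ => hex j)]; exact hk⟩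

/-- Any vertex sitting on a nontrivial cycle of `g` reaches no fixed point other than
itself. -/
lemma PTnot_reach_of_cycle {g : Fin n → Fin n} {x r : Fin n} {m : ℕ} (hm : 0 < m)
    (hcyc : g^[m] x = x) (hxR : x ≠ r) (hr : g r = r) : ¬ PTreach g x r := by
  rintro ⟨l, hl⟩
  apply hxR
  have h1 : g^[m * (l + 1)] x = x := by
    rw [Function.iterate_mul]; exact Function.iterate_fixed hcyc (l + 1)
  have h2 : g^[m * (l + 1)] x = r := PTreach_of_fixed_le hr hl (by nlinarith)
  rw [h1] at h2; exact h2

/-- The key structural equivalence: cutting the parent edge of a non-root `x`. -/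
lemma PTgood_update_iff {g' : Fin n → Fin n} {x v : Fin n} {R : Finset (Fin n)}
    (hxR : x ∉ R) (hx : g' x = x) :
    PTgood R (update g' x v) ↔ (PTgood (insert x R) g' ∧ ¬ PTreach g' v x) := by
  set g := update g' x v with hgdef
  have hgx : g x = v := update_self x v g'
  have hge : ∀ y, y ≠ x → g y = g' y := fun y hy => update_of_ne hy _ _
  constructor
  · rintro ⟨hroots, hall⟩
    have hfix : ∀ r ∈ R, g' r = r := fun r hr => by
      rw [← hge r (fun h => hxR (h ▸ hr))]; exact hroots r hr
    have hnvx : ¬ PTreach g' v x := by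
      intro hvx
      have hvxg : PTreach g v x := PTreach_update_of_reach hx hvx
      obtain ⟨k, hk⟩ := hvxg
      have hcyc : g^[k + 1] x = x := by
        rw [iterate_add_apply]; simp [hgx, hk]
      obtain ⟨r, hrR, hxr⟩ := hall x
      exact PTnot_reach_of_cycle (Nat.succ_pos k) hcyc (fun h => hxR (h ▸ hrR))
        (hroots r hrR) hxr
    refine ⟨⟨?_, ?_⟩, hnvx⟩
    · intro r hr
      rcases Finset.mem_insert.1 hr with h | h
      · exact h ▸ hx
      · exact hfix r h
    · intro w
      obtain ⟨r, hrR, hwr⟩ := hall w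
      rcases PTreach_or_of_reach_update hwr with h | h
      · exact ⟨r, Finset.mem_insert_of_mem hrR, h⟩
      · exact ⟨x, Finset.mem_insert_self x R, h⟩
  · rintro ⟨⟨hroots, hall⟩, hnvx⟩
    have hfixg : ∀ r ∈ R, g r = r := fun r hr => by
      rw [hge r (fun h => hxR (h ▸ hr))]; exact hroots r (Finset.mem_insert_of_mem hr)
    refine ⟨hfixg, ?_⟩
    have hvR : ∃ r ∈ R, PTreach g v r := by
      obtain ⟨ρ, hρ, hvρ⟩ := hall v
      rcases Finset.mem_insert.1 hρ with h | h
      · exact absurd (h ▸ hvρ) hnvx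
      · exact ⟨ρ, h, PTreach_update_of_reach hx hvρ⟩
    obtain ⟨r₀, hr₀R, hvr₀⟩ := hvR
    intro w
    obtain ⟨ρ, hρ, hwρ⟩ := hall w
    rcases Finset.mem_insert.1 hρ with h | h
    · subst h
      exact ⟨r₀, hr₀R, PTreach_trans (PTreach_update_of_reach hx hwρ)
        (PTreach_step (by rw [hgx]; exact hvr₀))⟩
    · exact ⟨ρ, h, PTreach_update_of_reach hx hwρ⟩

lemma PTreach_update_x_iff {g' : Fin n → Fin n} {x v : Fin n} {R : Finset (Fin n)}
    (hxR : x ∉ R) (hx : g' x = x) (hnvx : ¬ PTreach g' v x)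
    {r : Fin n} (hrR : r ∈ R) : PTreach (update g' x v) x r ↔ PTreach g' v r := by
  set g := update g' x v with hgdef
  have hgx : g x = v := update_self x v g'
  constructor
  · rintro ⟨k, hk⟩
    rcases Nat.eq_zero_or_pos k with h0 | hpos
    · exfalso
      subst h0
      simp only [Function.iterate_zero_apply] at hk
      exact hxR (by rw [hk]; exact hrR)
    · obtain ⟨k', rfl⟩ := Nat.exists_eq_succ_of_ne_zero hpos.ne'
      have hvr : PTreach g v r := ⟨k', by rw [← hgx, ← iterate_succ_apply]; exact hk⟩
      rcases PTreach_or_of_reach_update hvr with h | h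
      · exact h
      · exact absurd h hnvx
  · intro h
    exact PTreach_step (by rw [hgx]; exact PTreach_update_of_reach hx h)

lemma PTWt_update {p : Fin n → ℝ} {R : Finset (Fin n)} {x v : Fin n} {g' : Fin n → Fin n}
    (hxR : x ∉ R) :
    PTWt p R (update g' x v) = p v * PTWt p (insert x R) g' := by
  unfold PTWt
  have hxc : x ∈ Rᶜ := Finset.mem_compl.2 hxR
  rw [← Finset.mul_prod_erase _ _ hxc, update_self, Finset.compl_insert]
  congr 1
  refine Finset.prod_congr rfl fun w hw => ?_
  rw [update_of_ne (Finset.ne_of_mem_erase hw)]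

/-- Reindexing a sum over all maps by cutting the value at `x`. -/
lemma PTsum_cut (x : Fin n) (A : (Fin n → Fin n) → ℝ) :
    ∑ g : Fin n → Fin n, A g =
    ∑ g' : Fin n → Fin n, ∑ v : Fin n, if g' x = x then A (update g' x v) else 0 := by
  have h1 : (∑ g' : Fin n → Fin n, ∑ v : Fin n, if g' x = x then A (update g' x v) else 0)
      = ∑ q ∈ (Finset.univ ×ˢ Finset.univ : Finset ((Fin n → Fin n) × Fin n)),
          if q.1 x = x then A (update q.1 x q.2) else 0 := by
    rw [Finset.sum_product]
  rw [h1, Finset.sum_ite, Finset.sum_const_zero, add_zero]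
  refine Finset.sum_nbij' (fun g => ((update g x x, g x) : (Fin n → Fin n) × Fin n))
    (fun q => update q.1 x q.2) ?_ ?_ ?_ ?_ ?_
  · intro g _
    simp [Finset.mem_filter]
  · intro q _
    exact Finset.mem_univ _
  · intro g _
    simp only []
    rw [update_idem]
    exact update_eq_self x g
  · intro q hq
    simp only [Finset.mem_filter] at hq
    obtain ⟨-, hq1⟩ := hq
    ext : 1
    · simp only []
      rw [update_idem]
      conv_rhs => rw [← update_eq_self x q.1]
      rw [hq1]
    · simp [update_self]
  · intro g _
    simp only []
    rw [update_idem]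
    rw [update_eq_self]

lemma PTGw_self {p : Fin n → ℝ} {S : Finset (Fin n)} {r : Fin n} :
    PTGw p S r r = PTFw p S := by
  unfold PTGw PTFw
  refine Finset.sum_congr rfl fun g _ => ?_
  congr 1
  simp only [eq_iff_iff]
  exact ⟨fun h => h.1, fun h => ⟨h, PTreach_refl g r⟩⟩

lemma PTGw_ne {p : Fin n → ℝ} {S : Finset (Fin n)} {r v : Fin n} (hrS : r ∈ S)
    (hvS : v ∈ S) (hvr : v ≠ r) : PTGw p S r v = 0 := by
  unfold PTGw
  refine Finset.sum_eq_zero fun g _ => ?_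
  rw [if_neg]
  rintro ⟨hg, hreach⟩
  exact hvr (PTreach_uniq (hg.1 v hvS) (hg.1 r hrS) (PTreach_refl g v) hreach)

/-- The key "descendant mass" computation. -/
lemma PTpsi {p : Fin n → ℝ} (hsum : ∑ i, p i = 1) {S : Finset (Fin n)} {r : Fin n}
    (hrS : r ∈ S) (hF : PTFw p S = ∑ u ∈ S, p u)
    (hG : ∀ y, y ∉ S → PTGw p S r y = p r) :
    (∑ g' : Fin n → Fin n, ∑ v : Fin n,
      if PTgood S g' ∧ PTreach g' v r then PTWt p S g' * p v else 0) = p r := by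
  rw [Finset.sum_comm]
  have hinner : ∀ v : Fin n,
      (∑ g' : Fin n → Fin n, if PTgood S g' ∧ PTreach g' v r then PTWt p S g' * p v else 0)
      = PTGw p S r v * p v := by
    intro v
    unfold PTGw
    rw [Finset.sum_mul]
    refine Finset.sum_congr rfl fun g _ => ?_
    rw [ite_mul, zero_mul]
  simp_rw [hinner]
  rw [← Finset.sum_add_sum_compl S]
  have h1 : ∑ v ∈ S, PTGw p S r v * p v = (∑ u ∈ S, p u) * p r := by
    rw [Finset.sum_eq_single_of_mem r hrS]
    · rw [PTGw_self, hF]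
    · intro v hvS hvr
      rw [PTGw_ne hrS hvS hvr, zero_mul]
  have h2 : ∑ v ∈ Sᶜ, PTGw p S r v * p v = p r * (1 - ∑ u ∈ S, p u) := by
    have : ∀ v ∈ Sᶜ, PTGw p S r v * p v = p r * p v := fun v hv => by
      rw [hG v (Finset.mem_compl.1 hv)]
    rw [Finset.sum_congr rfl this, ← Finset.mul_sum]
    congr 1
    have := Finset.sum_add_sum_compl S p
    rw [hsum] at this
    linarith
  rw [h1, h2]; ring

/-- Main induction: the weighted forest counts. -/
theorem PTmain {p : Fin n → ℝ} (hsum : ∑ i, p i = 1) :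
    ∀ (m : ℕ) (R : Finset (Fin n)), Rᶜ.card = m →
      (PTFw p R = ∑ u ∈ R, p u) ∧ (∀ r ∈ R, ∀ x, x ∉ R → PTGw p R r x = p r) := by
  intro m
  induction m with
  | zero =>
    intro R hcard
    have hR : R = Finset.univ := by
      rw [← Finset.compl_eq_empty_iff]
      exact Finset.card_eq_zero.1 hcard
    subst hR
    constructor
    · have hgood : ∀ g : Fin n → Fin n, PTgood Finset.univ g ↔ g = id := by
        intro g
        constructor
        · intro h; funext w; exact h.1 w (Finset.mem_univ w)
        · rintro rfl
          exact ⟨fun r _ => rfl, fun w => ⟨w, Finset.mem_univ w, PTreach_refl id w⟩⟩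
      have hwt : ∀ g : Fin n → Fin n, PTWt p Finset.univ g = 1 := by
        intro g; unfold PTWt; rw [Finset.compl_univ, Finset.prod_empty]
      unfold PTFw
      simp_rw [hgood, hwt]
      simp [hsum]
    · intro r _ x hx
      exact absurd (Finset.mem_univ x) hx
  | succ m ih =>
    intro R hcard
    have hne : Rᶜ.Nonempty := Finset.card_pos.1 (hcard ▸ Nat.succ_pos m)
    constructor
    · obtain ⟨x, hx⟩ := hne
      have hxR : x ∉ R := Finset.mem_compl.1 hx
      set S := insert x R with hS
      have hScard : Sᶜ.card = m := by
        rw [hS, Finset.compl_insert, Finset.card_erase_of_mem hx, hcard]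
        rfl
      obtain ⟨hFS, hGS⟩ := ih S hScard
      have hxS : x ∈ S := Finset.mem_insert_self x R
      have step : PTFw p R =
          (∑ g' : Fin n → Fin n, ∑ v : Fin n,
            if PTgood S g' then PTWt p S g' * p v else 0)
          - (∑ g' : Fin n → Fin n, ∑ v : Fin n,
            if PTgood S g' ∧ PTreach g' v x then PTWt p S g' * p v else 0) := by
        unfold PTFw
        rw [PTsum_cut x, ← Finset.sum_sub_distrib]
        refine Finset.sum_congr rfl fun g' _ => ?_
        rw [← Finset.sum_sub_distrib]
        refine Finset.sum_congr rfl fun v _ => ?_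
        by_cases hgx : g' x = x
        · rw [if_pos hgx]
          by_cases hgood : PTgood S g'
          · by_cases hreach : PTreach g' v x
            · rw [if_neg, if_pos hgood, if_pos ⟨hgood, hreach⟩, sub_self]
              rw [PTgood_update_iff hxR hgx]
              tauto
            · rw [if_pos ((PTgood_update_iff hxR hgx).2 ⟨hgood, hreach⟩),
                if_pos hgood, if_neg (by tauto), sub_zero, PTWt_update hxR, mul_comm]
          · rw [if_neg, if_neg hgood, if_neg (by tauto), sub_zero]
            intro h
            exact hgood ((PTgood_update_iff hxR hgx).1 h).1
        · rw [if_neg hgx, if_neg, if_neg, sub_zero]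
          · rintro ⟨h, -⟩; exact hgx (h.1 x hxS)
          · intro h; exact hgx (h.1 x hxS)
      have hfirst : (∑ g' : Fin n → Fin n, ∑ v : Fin n,
          if PTgood S g' then PTWt p S g' * p v else 0) = PTFw p S := by
        unfold PTFw
        refine Finset.sum_congr rfl fun g' _ => ?_
        by_cases h : PTgood S g' <;> simp [h, ← Finset.mul_sum, hsum]
      have hsecond := PTpsi hsum hxS hFS (hGS x hxS)
      rw [step, hfirst, hsecond, hFS, hS, Finset.sum_insert hxR]
      ring
    · intro r hrR x hxR
      set S := insert x R with hS
      have hx : x ∈ Rᶜ := Finset.mem_compl.2 hxR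
      have hScard : Sᶜ.card = m := by
        rw [hS, Finset.compl_insert, Finset.card_erase_of_mem hx, hcard]
        rfl
      obtain ⟨hFS, hGS⟩ := ih S hScard
      have hxS : x ∈ S := Finset.mem_insert_self x R
      have hrS : r ∈ S := Finset.mem_insert_of_mem hrR
      have hrx : r ≠ x := fun h => hxR (h ▸ hrR)
      have step : PTGw p R r x =
          ∑ g' : Fin n → Fin n, ∑ v : Fin n,
            if PTgood S g' ∧ PTreach g' v r then PTWt p S g' * p v else 0 := by
        unfold PTGw
        rw [PTsum_cut x]
        refine Finset.sum_congr rfl fun g' _ => ?_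
        refine Finset.sum_congr rfl fun v _ => ?_
        by_cases hgx : g' x = x
        · rw [if_pos hgx]
          by_cases hc : PTgood S g' ∧ PTreach g' v r
          · obtain ⟨hgood, hvr⟩ := hc
            have hnvx : ¬ PTreach g' v x := by
              intro hvx
              exact hrx (PTreach_uniq (hgood.1 r hrS) hgx hvr hvx)
            rw [if_pos ⟨(PTgood_update_iff hxR hgx).2 ⟨hgood, hnvx⟩,
              (PTreach_update_x_iff hxR hgx hnvx hrR).2 hvr⟩,
              if_pos ⟨hgood, hvr⟩, PTWt_update hxR, mul_comm]
          · rw [if_neg, if_neg hc]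
            rintro ⟨hgu, hru⟩
            obtain ⟨hgood, hnvx⟩ := (PTgood_update_iff hxR hgx).1 hgu
            exact hc ⟨hgood, (PTreach_update_x_iff hxR hgx hnvx hrR).1 hru⟩
        · rw [if_neg hgx, if_neg]
          rintro ⟨h, -⟩
          exact hgx (h.1 x hxS)
      rw [step]
      exact PTpsi hsum hrS hFS (hGS r hrS)

lemma PTweight_eq {p : Fin n → ℝ} (f : Fin n → Fin n) :
    (∏ v : Fin n, p v ^ (Finset.univ.filter fun w : Fin n => f w = v ∧ w ≠ v).card)
      = ∏ w ∈ Finset.univ.filter fun w : Fin n => f w ≠ w, p (f w) := by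
  rw [← Finset.prod_fiberwise_of_maps_to
    (g := f) (t := Finset.univ) (fun w _ => Finset.mem_univ (f w)) (fun w => p (f w))]
  refine Finset.prod_congr rfl fun v _ => ?_
  have hset : (Finset.univ.filter fun w : Fin n => f w ≠ w).filter (fun w => f w = v)
      = Finset.univ.filter fun w : Fin n => f w = v ∧ w ≠ v := by
    rw [Finset.filter_filter]
    refine Finset.filter_congr fun w _ => ?_
    constructor
    · rintro ⟨h1, h2⟩; exact ⟨h2, fun hw => h1 (h2.trans hw.symm)⟩
    · rintro ⟨h1, h2⟩; exact ⟨fun hfw => h2 (hfw.symm.trans h1), h1⟩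
  rw [hset]
  exact ((Finset.prod_congr rfl fun w hw => by
    rw [(Finset.mem_filter.1 hw).2.1]).trans (Finset.prod_const (p v))).symm

lemma PTgood_singleton_iff (r : Fin n) (f : Fin n → Fin n) :
    PTgood {r} f ↔ (f r = r ∧ ∀ v : Fin n, ∃ k : ℕ, f^[k] v = r) := by
  unfold PTgood PTreach
  simp

lemma PTfix_filter_eq {r : Fin n} {f : Fin n → Fin n} (h : PTgood {r} f) :
    (Finset.univ.filter fun w : Fin n => f w ≠ w) = ({r} : Finset (Fin n))ᶜ := by
  ext w
  simp only [Finset.mem_filter, Finset.mem_univ, true_and, Finset.mem_compl,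
    Finset.mem_singleton]
  constructor
  · intro hw hwr
    exact hw (by rw [hwr]; exact h.1 r (Finset.mem_singleton_self r))
  · intro hwr hfw
    obtain ⟨ρ, hρ, hwρ⟩ := h.2 w
    rw [Finset.mem_singleton] at hρ
    subst hρ
    exact hwr (PTfixed_reach hfw hwρ).symm

lemma PTroot_uniq {r r' : Fin n} {f : Fin n → Fin n} (h : PTgood {r} f)
    (h' : PTgood {r'} f) : r = r' := by
  obtain ⟨ρ, hρ, hrρ⟩ := h.2 r'
  rw [Finset.mem_singleton] at hρ
  subst hρ
  exact PTfixed_reach (h'.1 r' (Finset.mem_singleton_self r')) hrρ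

end PTreeAux

open scoped Classical in
/-- The p-tree weights sum to 1: encoding a rooted tree on `[n]` (edges directed to
the root) as a parent map `f` fixing the root and such that every vertex reaches the
root by iteration, one has `∑_{trees t} ∏_v p_v ^ d_v(t) = 1`, where `d_v(t)` is the
number of children of `v` in `t`. -/
theorem stmt13 (n : ℕ) (hn : 0 < n) (p : Fin n → ℝ)
    (hp : ∀ i, 0 < p i) (hsum : ∑ i, p i = 1) :
    ∑ f : Fin n → Fin n,
      (if ∃ r : Fin n, f r = r ∧ ∀ v : Fin n, ∃ k : ℕ, f^[k] v = r then
        ∏ v : Fin n,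
          p v ^ (Finset.univ.filter fun w : Fin n => f w = v ∧ w ≠ v).card
      else 0) = 1 := by
  have key : ∀ f : Fin n → Fin n,
      (if ∃ r : Fin n, f r = r ∧ ∀ v : Fin n, ∃ k : ℕ, f^[k] v = r then
        ∏ v : Fin n,
          p v ^ (Finset.univ.filter fun w : Fin n => f w = v ∧ w ≠ v).card
      else 0)
      = ∑ r : Fin n, if PTgood {r} f then PTWt p {r} f else 0 := by
    intro f
    by_cases h : ∃ r : Fin n, f r = r ∧ ∀ v : Fin n, ∃ k : ℕ, f^[k] v = r
    · obtain ⟨r₀, h₀⟩ := h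
      have hg₀ : PTgood {r₀} f := (PTgood_singleton_iff r₀ f).2 h₀
      rw [if_pos ⟨r₀, h₀⟩, Finset.sum_eq_single_of_mem r₀ (Finset.mem_univ r₀)]
      · rw [if_pos hg₀, PTweight_eq f, PTfix_filter_eq hg₀]
        rfl
      · intro r _ hr
        rw [if_neg]
        intro hg
        exact hr (PTroot_uniq hg hg₀)
    · rw [if_neg h]
      symm
      refine Finset.sum_eq_zero fun r _ => ?_
      rw [if_neg]
      intro hg
      exact h ⟨r, (PTgood_singleton_iff r f).1 hg⟩
  rw [Finset.sum_congr rfl fun f _ => key f, Finset.sum_comm]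
  have hterm : ∀ r : Fin n,
      (∑ f : Fin n → Fin n, if PTgood {r} f then PTWt p {r} f else 0) = p r := by
    intro r
    have h := (PTmain hsum (({r} : Finset (Fin n))ᶜ.card) {r} rfl).1
    rw [Finset.sum_singleton] at h
    exact h
  rw [Finset.sum_congr rfl fun r _ => hterm r, hsum]
end

section
/- Suppose (W̄ₙ) is a sequence of nondecreasing functions [0,∞) → [0,1] converging uniformly to a continuous, strictly increasing (until reaching 1) function W̄ with W̄(0) = 0 and lim_{h→∞} W̄(h) = 1. Define the right-continuous inverses W̄ₙ^{-1}(u) = inf{h : W̄ₙ(h) > u}. Then W̄ₙ(W̄ₙ^{-1}(u)) → u uniformly for u in compact subsets of [0,1). -/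
open Set Filter

/-- If nondecreasing functions `Wₙ : [0,∞) → [0,1]` converge uniformly on `[0,∞)` to a
continuous function `W` with `W 0 = 0`, `W → 1` at infinity, and `W` strictly
increasing until it reaches `1`, then `Wₙ (Wₙ⁻¹ u) → u` uniformly for `u` in compact
subsets of `[0,1)`, where `Wₙ⁻¹ u = inf {h ≥ 0 : Wₙ h > u}` is the generalized
inverse. -/
theorem stmt18 (Wn : ℕ → ℝ → ℝ) (W : ℝ → ℝ)
    (hWn_mono : ∀ n, MonotoneOn (Wn n) (Ici 0))
    (hWn_range : ∀ n, ∀ h : ℝ, 0 ≤ h → Wn n h ∈ Icc (0:ℝ) 1)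
    (hW_cont : ContinuousOn W (Ici 0))
    (hW0 : W 0 = 0)
    (hWlim : Tendsto W atTop (nhds 1))
    (hW_strict : ∀ a b : ℝ, 0 ≤ a → a < b → W a < 1 → W a < W b)
    (hconv : TendstoUniformlyOn (fun n => Wn n) W atTop (Ici 0)) :
    ∀ K : Set ℝ, IsCompact K → K ⊆ Ico (0:ℝ) 1 →
      TendstoUniformlyOn
        (fun n u => Wn n (sInf {h : ℝ | 0 ≤ h ∧ u < Wn n h}))
        (fun u => u) atTop K := by
  intro K hK hKsub
  rcases K.eq_empty_or_nonempty with rfl | hKne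
  · exact tendstoUniformlyOn_empty
  rw [Metric.tendstoUniformlyOn_iff]
  intro ε hε
  obtain ⟨b, hbK, hbub⟩ := hK.exists_isGreatest hKne
  have hb0 : (0:ℝ) ≤ b := (hKsub hbK).1
  have hb1 : b < 1 := (hKsub hbK).2
  set ε' := min (ε/2) ((1-b)/2) with hε'def
  have hε'pos : 0 < ε' := lt_min (by linarith) (by linarith)
  have hε'le : ε' ≤ ε/2 := min_le_left _ _
  have hε'b : ε' ≤ (1-b)/2 := min_le_right _ _
  -- choose H with W H > b + ε'
  have hev : ∀ᶠ h in atTop, b + ε' < W h :=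
    hWlim.eventually (eventually_gt_nhds (by linarith))
  obtain ⟨H, hH⟩ := (hev.and (eventually_ge_atTop (0:ℝ))).exists
  obtain ⟨hHgt, hH0⟩ := hH
  -- uniform continuity of W on [0, H+1]
  have hWc : ContinuousOn W (Icc 0 (H+1)) := hW_cont.mono Icc_subset_Ici_self
  have huc := (isCompact_Icc (a := (0:ℝ)) (b := H+1)).uniformContinuousOn_of_continuous hWc
  rw [Metric.uniformContinuousOn_iff] at huc
  obtain ⟨δ, hδ, hδW⟩ := huc (ε'/3) (by positivity)
  have hdist : ∀ x ∈ Icc (0:ℝ) (H+1), ∀ y ∈ Icc (0:ℝ) (H+1),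
      |x - y| < δ → |W x - W y| < ε'/3 := by
    intro x hx y hy hxy
    have := hδW x hx y hy (by rwa [Real.dist_eq])
    rwa [Real.dist_eq] at this
  rw [Metric.tendstoUniformlyOn_iff] at hconv
  filter_upwards [hconv (ε'/4) (by positivity)] with n hn u huK
  have hu0 : (0:ℝ) ≤ u := (hKsub huK).1
  have hub' : u ≤ b := hbub huK
  have hd : ∀ x : ℝ, 0 ≤ x → |W x - Wn n x| < ε'/4 := by
    intro x hx
    have := hn x hx
    rwa [Real.dist_eq] at this
  set S := {h : ℝ | 0 ≤ h ∧ u < Wn n h} with hS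
  have hHS : H ∈ S := by
    refine ⟨hH0, ?_⟩
    have := abs_lt.mp (hd H hH0)
    linarith [this.1]
  have hSne : S.Nonempty := ⟨H, hHS⟩
  have hSbd : BddBelow S := ⟨0, fun h hh => hh.1⟩
  set h₀ := sInf S with hh₀def
  have hh₀0 : 0 ≤ h₀ := le_csInf hSne (fun h hh => hh.1)
  have hh₀H : h₀ ≤ H := csInf_le hSbd hHS
  have hlt : ∀ x : ℝ, h₀ < x → u < Wn n x := by
    intro x hx
    obtain ⟨y, hyS, hyx⟩ := exists_lt_of_csInf_lt hSne hx
    have hx0 : (0:ℝ) ≤ x := le_trans hyS.1 hyx.le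
    exact lt_of_lt_of_le hyS.2 (hWn_mono n hyS.1 hx0 hyx.le)
  have hle : ∀ x : ℝ, 0 ≤ x → x < h₀ → Wn n x ≤ u := by
    intro x hx0 hx
    by_contra hc
    push_neg at hc
    exact absurd (csInf_le hSbd ⟨hx0, hc⟩) (not_le.mpr hx)
  have hupper : Wn n h₀ ≤ u + 5*ε'/6 := by
    rcases eq_or_lt_of_le hh₀0 with heq | hpos
    · have h1 := abs_lt.mp (hd 0 le_rfl)
      rw [hW0] at h1
      rw [← heq]
      linarith [h1.1]
    · set x := max 0 (h₀ - δ/2) with hxdef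
      have hx0 : 0 ≤ x := le_max_left _ _
      have hxlt : x < h₀ := max_lt hpos (by linarith)
      have hxge : h₀ - δ/2 ≤ x := le_max_right _ _
      have hxδ : |h₀ - x| < δ := by
        rw [abs_of_nonneg (by linarith)]
        linarith
      have hWx := hdist h₀ ⟨hh₀0, by linarith⟩ x ⟨hx0, by linarith⟩ hxδ
      have a1 := abs_lt.mp (hd h₀ hh₀0)
      have a2 := abs_lt.mp (hd x hx0)
      have a3 := abs_lt.mp hWx
      have a4 := hle x hx0 hxlt
      linarith [a1.1, a2.2, a3.2]
  have hlower : u ≤ Wn n h₀ + 5*ε'/6 := by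
    set x := h₀ + min (δ/2) 1 with hxdef
    have hmin : 0 < min (δ/2) 1 := lt_min (by linarith) one_pos
    have hx0 : 0 ≤ x := by
      have := hmin.le
      simp only [hxdef]; linarith
    have hxH : x ≤ H + 1 := by
      have : min (δ/2) 1 ≤ 1 := min_le_right _ _
      simp only [hxdef]; linarith
    have hxgt : h₀ < x := by simp only [hxdef]; linarith
    have hxδ : |x - h₀| < δ := by
      rw [abs_of_nonneg (by linarith)]
      have : min (δ/2) 1 ≤ δ/2 := min_le_left _ _
      simp only [hxdef]; linarith
    have hu_lt := hlt x hxgt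
    have a1 := abs_lt.mp (hd x hx0)
    have a2 := abs_lt.mp (hd h₀ hh₀0)
    have a3 := abs_lt.mp (hdist x ⟨hx0, hxH⟩ h₀ ⟨hh₀0, by linarith⟩ hxδ)
    linarith [a1.2, a2.1, a3.2]
  show dist u (Wn n h₀) < ε
  rw [Real.dist_eq, abs_lt]
  constructor <;> linarith
end
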